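/- Let R be a nontrivial ring (1 ≠ 0) and n ≥ 2 a natural number. Then the ring Tₙ(R) of n×n upper triangular matrices over R is not central linear Armendariz. -/

import Mathlib

open Polynomial

/-- A ring `R` is *central linear Armendariz* if whenever the product of two linear
polynomials `(a₀ + a₁x)(b₀ + b₁x) = 0` in `R[x]`, each product `aᵢbⱼ` is central in `R`. -/
def CentralLinearArmendariz (R : Type*) [Ring R] : Prop :=
  ∀ a₀ a₁ b₀ b₁ : R,
    (C a₀ + C a₁ * X) * (C b₀ + C b₁ * X) = 0 →
      a₀ * b₀ ∈ Set.center R ∧ a₀ * b₁ ∈ Set.center R ∧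
      a₁ * b₀ ∈ Set.center R ∧ a₁ * b₁ ∈ Set.center R

/-- The ring `Tₙ(R)` of `n × n` upper triangular matrices over `R`,
as a subring of the full matrix ring. -/
def upperTriangularRing (n : ℕ) (R : Type*) [Ring R] :
    Subring (Matrix (Fin n) (Fin n) R) where
  carrier := {M | ∀ i j : Fin n, j < i → M i j = 0}
  zero_mem' _ _ _ := rfl
  one_mem' i j hij := Matrix.one_apply_ne' (by exact fun h => absurd h (ne_of_lt hij))
  add_mem' h₁ h₂ i j hij := by
    simp [Matrix.add_apply, h₁ i j hij, h₂ i j hij]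
  neg_mem' h i j hij := by simp [Matrix.neg_apply, h i j hij]
  mul_mem' {M N} hM hN i j hij := by
    rw [Matrix.mul_apply]
    apply Finset.sum_eq_zero
    intro k _
    by_cases hki : k < i
    · rw [hM i k hki, zero_mul]
    · rw [hN k j (lt_of_lt_of_le hij (not_lt.mp hki)), mul_zero]

/-! In `Tₙ(R)` take `e = E₀₀`, `u = E₀₁`, `f = E₁₁`. Then `(e + u x)(f - u x) = 0`, yet the
coefficient product `e (-u) = -u` is not central since `e u = u` while `u e = 0`. -/

theorem linear_mul_linear {R : Type*} [Ring R] (a₀ a₁ b₀ b₁ : R) :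
    (C a₀ + C a₁ * X) * (C b₀ + C b₁ * X) =
      C (a₀ * b₀) + C (a₀ * b₁ + a₁ * b₀) * X + C (a₁ * b₁) * X ^ 2 := by
  simp only [C_add, C_mul]
  noncomm_ring
  simp only [X_mul, mul_assoc]
  abel

theorem CentralLinearArmendariz.eq_zero_of_mul_eq {R : Type*} [Ring R]
    (h : CentralLinearArmendariz R) {e u f : R}
    (hef : e * f = 0) (heu : e * u = u) (huf : u * f = u) (hue : u * e = 0) : u = 0 := by
  have huu : u * u = 0 := by rw [← heu, ← mul_assoc, mul_assoc e, hue, mul_zero, zero_mul]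
  have hzero : (C e + C u * X) * (C f + C (-u) * X) = 0 := by
    rw [linear_mul_linear, hef, mul_neg, mul_neg, heu, huf, huu]
    simp
  obtain ⟨-, hcentral, -, -⟩ := h e u f (-u) hzero
  have hcomm : e * (e * -u) = e * -u * e := Semigroup.mem_center_iff.mp hcentral e
  rwa [mul_neg, heu, mul_neg, heu, neg_mul, hue, neg_zero, neg_eq_zero] at hcomm

theorem single_mem_upperTriangularRing {n : ℕ} {R : Type*} [Ring R] {i j : Fin n} (hij : i ≤ j)
    (c : R) : Matrix.single i j c ∈ upperTriangularRing n R := by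
  intro k l hlk
  apply Matrix.single_apply_of_ne
  rintro ⟨rfl, rfl⟩
  exact absurd hlk (not_lt.2 hij)

theorem upperTriangularRing.not_centralLinearArmendariz {R : Type*} [Ring R] [Nontrivial R]
    {n : ℕ} {i j : Fin n} (hij : i < j) : ¬ CentralLinearArmendariz (upperTriangularRing n R) := by
  intro h
  let E (k l : Fin n) (hkl : k ≤ l) : upperTriangularRing n R :=
    ⟨Matrix.single k l 1, single_mem_upperTriangularRing hkl 1⟩
  have hu := h.eq_zero_of_mul_eq (e := E i i le_rfl) (u := E i j hij.le) (f := E j j le_rfl)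
    (Subtype.ext (Matrix.single_mul_single_of_ne _ _ _ _ hij.ne _))
    (Subtype.ext ((Matrix.single_mul_single_same _ _ _ _ _).trans (by rw [one_mul])))
    (Subtype.ext ((Matrix.single_mul_single_same _ _ _ _ _).trans (by rw [one_mul])))
    (Subtype.ext (Matrix.single_mul_single_of_ne _ _ _ _ hij.ne' _))
  have hentry := congrFun (congrFun (congrArg Subtype.val hu) i) j
  simp [E] at hentry

/-- For a nontrivial ring `R` and `n ≥ 2`, the ring `Tₙ(R)` of `n × n` upper triangular
matrices over `R` is not central linear Armendariz. -/
theorem stmt_2 (R : Type*) [Ring R] [Nontrivial R] (n : ℕ) (hn : 2 ≤ n) :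
    ¬ CentralLinearArmendariz (upperTriangularRing n R) :=
  upperTriangularRing.not_centralLinearArmendariz (i := ⟨0, by omega⟩) (j := ⟨1, by omega⟩)
    (Fin.mk_lt_mk.mpr one_pos)
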